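/- Let f(x₁,…,xₙ) ∈ ℝ[x₁,…,xₙ] and let k be an odd positive integer. Then f(x₁,…,xₙ) is a sum of nonnegative circuit polynomials with the same support if and only if f(x₁^k,…,xₙ^k) is a sum of nonnegative circuit polynomials with the same support. -/

import Mathlib

/-!
The substitution `xᵢ ↦ xᵢᵏ` is `expand k`: it is injective and sends `x^a` to `x^(k • a)`, so it
scales supports by `k`, and since `k` is odd, `k • a` is even exactly when `a` is, so `Λ` and `Γ`
scale as well. Scaling by `k` is an affine automorphism of `ℝⁿ`, so it preserves simplices and
barycentric coordinates, and `x ↦ xᵏ` is a bijection of `ℝ`, so nonnegativity is preserved in both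
directions. Conversely, every summand of a decomposition of `f(xᵏ)` has its exponents in
`k • supp f`, hence is the substitution of a summand for `f`.
-/

open MvPolynomial Finset Classical

namespace SONC

noncomputable section

/-- Embedding of lattice exponent vectors into `ℝⁿ`. -/
def toR {n : ℕ} (a : Fin n →₀ ℕ) : Fin n → ℝ := fun i => (a i : ℝ)

/-- A lattice point is even if all its coordinates are even, i.e. it lies in `(2ℕ)ⁿ`. -/
def IsEvenPoint {n : ℕ} (a : Fin n →₀ ℕ) : Prop := ∀ i, Even (a i)

/-- A polynomial is nonnegative if it takes nonnegative values on all of `ℝⁿ`. -/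
def IsNonneg {n : ℕ} (f : MvPolynomial (Fin n) ℝ) : Prop :=
  ∀ x : Fin n → ℝ, 0 ≤ eval x f

/-- `β` lies in the interior of the simplex with vertex set `A`, with barycentric
coordinates `lam`. -/
def IsInteriorPt {n : ℕ} (A : Finset (Fin n →₀ ℕ)) (lam : (Fin n →₀ ℕ) → ℝ)
    (β : Fin n →₀ ℕ) : Prop :=
  (∀ a ∈ A, 0 < lam a) ∧ ∑ a ∈ A, lam a = 1 ∧
    ∀ i, (β i : ℝ) = ∑ a ∈ A, lam a * (a i : ℝ)

/-- `g` is a circuit polynomial with simplex vertex set `A` and inner exponent `β`. -/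
def IsCircuitOn {n : ℕ} (A : Finset (Fin n →₀ ℕ)) (β : Fin n →₀ ℕ)
    (g : MvPolynomial (Fin n) ℝ) : Prop :=
  AffineIndependent ℝ (fun a : A => toR (a : Fin n →₀ ℕ)) ∧ β ∉ A ∧
  ∃ (c : (Fin n →₀ ℕ) → ℝ) (d : ℝ) (lam : (Fin n →₀ ℕ) → ℝ),
    (∀ a ∈ A, 0 < c a) ∧ IsInteriorPt A lam β ∧
    g = (∑ a ∈ A, monomial a (c a)) - monomial β d

/-- `Λ(f)`: the exponents in the support of `f` that are even and have positive coefficient. -/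
def posSupp {n : ℕ} (f : MvPolynomial (Fin n) ℝ) : Finset (Fin n →₀ ℕ) :=
  f.support.filter fun a => IsEvenPoint a ∧ 0 < f.coeff a

/-- `Γ(f) := supp(f) \ Λ(f)`. -/
def negSupp {n : ℕ} (f : MvPolynomial (Fin n) ℝ) : Finset (Fin n →₀ ℕ) :=
  f.support \ posSupp f

/-- `f` is a sum of nonnegative circuit polynomials with the same support. -/
def SONCSameSupport {n : ℕ} (f : MvPolynomial (Fin n) ℝ) : Prop :=
  ∃ (m : ℕ) (g : Fin m → MvPolynomial (Fin n) ℝ)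
    (A : Fin m → Finset (Fin n →₀ ℕ)) (β : Fin m → (Fin n →₀ ℕ)),
    f = ∑ i, g i ∧
    ∀ i, IsCircuitOn (A i) (β i) (g i) ∧ IsNonneg (g i) ∧
      A i ⊆ posSupp f ∧ β i ∈ negSupp f

section

variable {n k : ℕ}

lemma aeval_X_pow_eq_expand (f : MvPolynomial (Fin n) ℝ) :
    aeval (fun i => (X i : MvPolynomial (Fin n) ℝ) ^ k) f = expand k f :=
  rfl

lemma surjective_pow_of_odd (hk : Odd k) : Function.Surjective fun x : ℝ => x ^ k := by
  intro y
  rcases le_total 0 y with hy | hy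
  · exact ⟨y ^ (k⁻¹ : ℝ), Real.rpow_inv_natCast_pow hy hk.pos.ne'⟩
  · refine ⟨-(-y) ^ (k⁻¹ : ℝ), ?_⟩
    dsimp only
    rw [hk.neg_pow, Real.rpow_inv_natCast_pow (neg_nonneg.2 hy) hk.pos.ne', neg_neg]

lemma isNonneg_expand_iff (hk : Odd k) {g : MvPolynomial (Fin n) ℝ} :
    IsNonneg (expand k g) ↔ IsNonneg g := by
  simp only [IsNonneg, eval_expand]
  refine ⟨fun h x => ?_, fun h x => h _⟩
  choose y hy using fun i => surjective_pow_of_odd hk (x i)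
  simpa [show y ^ k = x from funext hy] using h y

lemma isEvenPoint_smul_iff (hk : Odd k) {a : Fin n →₀ ℕ} :
    IsEvenPoint (k • a) ↔ IsEvenPoint a := by
  simp [IsEvenPoint, Nat.even_mul, Nat.not_even_iff_odd.2 hk]

lemma posSupp_expand (hk : Odd k) (f : MvPolynomial (Fin n) ℝ) :
    posSupp (expand k f) = (posSupp f).image (k • ·) := by
  simp only [posSupp, support_expand _ hk.pos.ne', Finset.filter_image,
    isEvenPoint_smul_iff hk, coeff_expand_smul _ hk.pos.ne']

lemma negSupp_expand (hk : Odd k) (f : MvPolynomial (Fin n) ℝ) :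
    negSupp (expand k f) = (negSupp f).image (k • ·) := by
  rw [negSupp, negSupp, support_expand _ hk.pos.ne', posSupp_expand hk,
    Finset.image_sdiff _ _ (nsmul_right_injective hk.pos.ne')]

lemma toR_injective : Function.Injective (toR : (Fin n →₀ ℕ) → Fin n → ℝ) :=
  fun a b h => Finsupp.ext fun i => by simpa [toR] using congrFun h i

lemma toR_smul (a : Fin n →₀ ℕ) : toR (k • a) = (k : ℝ) • toR a := by
  ext i
  simp [toR]

lemma affineIndependent_toR_iff (A : Finset (Fin n →₀ ℕ)) :
    AffineIndependent ℝ (fun a : A => toR (a : Fin n →₀ ℕ)) ↔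
      AffineIndependent ℝ ((↑) : toR '' (A : Set (Fin n →₀ ℕ)) → Fin n → ℝ) :=
  affineIndependent_equiv (k := ℝ) (p := Subtype.val)
    (Equiv.Set.image toR (A : Set (Fin n →₀ ℕ)) toR_injective)

lemma affineIndependent_toR_image_smul_iff (hk : k ≠ 0) (A : Finset (Fin n →₀ ℕ)) :
    AffineIndependent ℝ (fun a : A.image (k • ·) => toR (a : Fin n →₀ ℕ)) ↔
      AffineIndependent ℝ (fun a : A => toR (a : Fin n →₀ ℕ)) := by
  let e := (LinearEquiv.smulOfNeZero ℝ (Fin n → ℝ) (k : ℝ) (Nat.cast_ne_zero.2 hk)).toAffineEquiv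
  have himage : toR '' ((A.image (k • ·) : Finset _) : Set (Fin n →₀ ℕ)) = e '' (toR '' A) := by
    simp [Set.image_image, toR_smul, e]
  rw [affineIndependent_toR_iff, affineIndependent_toR_iff, himage,
    e.affineIndependent_set_of_eq_iff]

lemma isInteriorPt_image_smul_iff (hk : k ≠ 0) {A : Finset (Fin n →₀ ℕ)}
    {lam : (Fin n →₀ ℕ) → ℝ} {β : Fin n →₀ ℕ} :
    IsInteriorPt (A.image (k • ·)) lam (k • β) ↔ IsInteriorPt A (fun a => lam (k • a)) β := by
  have hkR : (k : ℝ) ≠ 0 := Nat.cast_ne_zero.2 hk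
  have hcoord : ∀ i, (k * β i : ℝ) = ∑ a ∈ A, lam (k • a) * (k * a i) ↔
      (β i : ℝ) = ∑ a ∈ A, lam (k • a) * a i := fun i => by
    simp_rw [mul_left_comm _ (k : ℝ), ← Finset.mul_sum]
    exact mul_right_inj' hkR
  simp only [IsInteriorPt, Finset.forall_mem_image,
    Finset.sum_image fun a _ b _ h => nsmul_right_injective hk h, Finsupp.smul_apply, smul_eq_mul,
    Nat.cast_mul, hcoord]

lemma expand_sum_monomial_sub_monomial (hk : k ≠ 0) (A : Finset (Fin n →₀ ℕ))
    (c : (Fin n →₀ ℕ) → ℝ) (β : Fin n →₀ ℕ) (d : ℝ) :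
    expand k ((∑ a ∈ A, monomial a (c (k • a))) - monomial β d) =
      (∑ b ∈ A.image (k • ·), monomial b (c b)) - monomial (k • β) d := by
  rw [Finset.sum_image fun a _ b _ h => nsmul_right_injective hk h]
  simp only [map_sub, map_sum, expand_monomial]

lemma isCircuitOn_image_smul_iff (hk : k ≠ 0) {A : Finset (Fin n →₀ ℕ)} {β : Fin n →₀ ℕ}
    {g : MvPolynomial (Fin n) ℝ} :
    IsCircuitOn (A.image (k • ·)) (k • β) g ↔ ∃ g₀, IsCircuitOn A β g₀ ∧ expand k g₀ = g := by
  have hmem : ∀ {a}, k • a ∈ A.image (k • ·) ↔ a ∈ A := (nsmul_right_injective hk).mem_finset_image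
  constructor
  · rintro ⟨haff, hβ, c, d, lam, hc, hlam, rfl⟩
    refine ⟨(∑ a ∈ A, monomial a (c (k • a))) - monomial β d,
      ⟨(affineIndependent_toR_image_smul_iff hk A).1 haff, fun h => hβ (hmem.2 h),
        fun a => c (k • a), d, fun a => lam (k • a), fun a ha => hc _ (hmem.2 ha),
        (isInteriorPt_image_smul_iff hk).1 hlam, rfl⟩,
      expand_sum_monomial_sub_monomial hk A c β d⟩
  · rintro ⟨g₀, ⟨haff, hβ, c, d, lam, hc, hlam, rfl⟩, rfl⟩
    let unscale := Function.invFun fun a : Fin n →₀ ℕ => k • a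
    have hunscale : ∀ a, unscale (k • a) = a :=
      Function.leftInverse_invFun (nsmul_right_injective hk)
    refine ⟨(affineIndependent_toR_image_smul_iff hk A).2 haff, fun h => hβ (hmem.1 h),
      c ∘ unscale, d, lam ∘ unscale, ?_, ?_, ?_⟩
    · simpa [hunscale] using hc
    · simpa [isInteriorPt_image_smul_iff hk, hunscale] using hlam
    · simpa [hunscale] using expand_sum_monomial_sub_monomial hk A (c ∘ unscale) β d

def IsSameSupportCircuit (f : MvPolynomial (Fin n) ℝ) (A : Finset (Fin n →₀ ℕ))
    (β : Fin n →₀ ℕ) (g : MvPolynomial (Fin n) ℝ) : Prop :=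
  IsCircuitOn A β g ∧ IsNonneg g ∧ A ⊆ posSupp f ∧ β ∈ negSupp f

lemma isSameSupportCircuit_expand_iff (hk : Odd k) {f : MvPolynomial (Fin n) ℝ}
    {A' : Finset (Fin n →₀ ℕ)} {β' : Fin n →₀ ℕ} {g' : MvPolynomial (Fin n) ℝ} :
    IsSameSupportCircuit (expand k f) A' β' g' ↔ ∃ A β g, IsSameSupportCircuit f A β g ∧
      A.image (k • ·) = A' ∧ k • β = β' ∧ expand k g = g' := by
  constructor
  · rintro ⟨hcirc, hnonneg, hA', hβ'⟩
    rw [posSupp_expand hk] at hA'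
    rw [negSupp_expand hk] at hβ'
    obtain ⟨A, hA, rfl⟩ := Finset.subset_image_iff.1 hA'
    obtain ⟨β, hβ, rfl⟩ := Finset.mem_image.1 hβ'
    obtain ⟨g, hg, rfl⟩ := (isCircuitOn_image_smul_iff hk.pos.ne').1 hcirc
    exact ⟨A, β, g, ⟨hg, (isNonneg_expand_iff hk).1 hnonneg, hA, hβ⟩, rfl, rfl, rfl⟩
  · rintro ⟨A, β, g, ⟨hg, hnonneg, hA, hβ⟩, rfl, rfl, rfl⟩
    exact ⟨(isCircuitOn_image_smul_iff hk.pos.ne').2 ⟨g, hg, rfl⟩,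
      (isNonneg_expand_iff hk).2 hnonneg, posSupp_expand hk f ▸ Finset.image_subset_image hA,
      negSupp_expand hk f ▸ Finset.mem_image_of_mem _ hβ⟩

end

theorem sameSupport_iff_odd_power_substitution_general {n : ℕ}
    (f : MvPolynomial (Fin n) ℝ) (k : ℕ) (hk : Odd k) :
    SONCSameSupport f ↔
      SONCSameSupport ((aeval fun i => (X i : MvPolynomial (Fin n) ℝ) ^ k) f) := by
  rw [aeval_X_pow_eq_expand]
  constructor
  · rintro ⟨m, g, A, β, rfl, hg⟩
    exact ⟨m, fun i => expand k (g i), fun i => (A i).image (k • ·), fun i => k • β i,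
      map_sum _ _ _,
      fun i => (isSameSupportCircuit_expand_iff hk).2 ⟨A i, β i, g i, hg i, rfl, rfl, rfl⟩⟩
  · rintro ⟨m, g', A', β', hf, hg'⟩
    choose A β g hg _ _ hexpand using fun i => (isSameSupportCircuit_expand_iff hk).1 (hg' i)
    refine ⟨m, g, A, β, expand_injective hk.pos ?_, hg⟩
    simp only [hf, map_sum, hexpand]

/-- For an odd positive integer `k`, `f(x₁, …, xₙ)` is a sum of
nonnegative circuit polynomials with the same support iff `f(x₁^k, …, xₙ^k)` is. -/
theorem sameSupport_iff_odd_power_substitution {n : ℕ}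
    (f : MvPolynomial (Fin n) ℝ) (k : ℕ) (hk : Odd k) (hk0 : 0 < k) :
    SONCSameSupport f ↔
      SONCSameSupport ((aeval fun i => (X i : MvPolynomial (Fin n) ℝ) ^ k) f) :=
  sameSupport_iff_odd_power_substitution_general f k hk

end
end SONC
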